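/- arXiv:2412.20778 — 4 statements merged into one kernel-verified Lean document; each statement's English description precedes it below -/
import Mathlib

section
/- Let ℓ > 0 and let v : ℝ → ℝ be twice continuously differentiable on [0, ℓ] with v(0) = v(ℓ) = 0. Then v'(0)² ≤ (5ℓ/3) ∫₀^ℓ v''(x)² dx and v'(ℓ)² ≤ (5ℓ/3) ∫₀^ℓ v''(x)² dx. -/
/-!
By Rolle's theorem `v'` vanishes at some `c ∈ (0, ℓ)`, so `v'(0) = -∫₀^c v''` and
`v'(ℓ) = ∫_c^ℓ v''`. Cauchy–Schwarz then bounds both squares by `ℓ ∫₀^ℓ (v'')²`,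
which is already stronger than the constant `5ℓ/3`.
-/

open Set

theorem sq_intervalIntegral_le_mul_intervalIntegral_sq {f : ℝ → ℝ} {a b : ℝ} (hab : a ≤ b)
    (hf : IntervalIntegrable f MeasureTheory.volume a b)
    (hf2 : IntervalIntegrable (fun x => f x ^ 2) MeasureTheory.volume a b) :
    (∫ x in a..b, f x) ^ 2 ≤ (b - a) * ∫ x in a..b, f x ^ 2 := by
  have hquadratic : ∀ m : ℝ,
      0 ≤ (b - a) * (m * m) + (-2 * ∫ x in a..b, f x) * m + ∫ x in a..b, f x ^ 2 := by
    intro m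
    have hexpand : ∫ x in a..b, (f x - m) ^ 2 =
        (b - a) * (m * m) + (-2 * ∫ x in a..b, f x) * m + ∫ x in a..b, f x ^ 2 := by
      have hlinear := (hf.const_mul 2).mul_const m
      simp_rw [sub_sq]
      rw [intervalIntegral.integral_add (hf2.sub hlinear) intervalIntegrable_const,
        intervalIntegral.integral_sub hf2 hlinear, intervalIntegral.integral_mul_const,
        intervalIntegral.integral_const_mul, intervalIntegral.integral_const, smul_eq_mul]
      ring
    rw [← hexpand]
    exact intervalIntegral.integral_nonneg hab fun x _ => sq_nonneg _
  have hdiscrim := discrim_le_zero hquadratic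
  rw [discrim] at hdiscrim
  linarith

theorem sq_sub_le_mul_intervalIntegral_sq_deriv {g g' : ℝ → ℝ} {a b c d : ℝ}
    (hca : c ≤ a) (hab : a ≤ b) (hbd : b ≤ d)
    (hg : ∀ x ∈ Icc c d, HasDerivAt g (g' x) x) (hg' : ContinuousOn g' (Icc c d)) :
    (g b - g a) ^ 2 ≤ (d - c) * ∫ x in c..d, g' x ^ 2 := by
  have hsub : Icc a b ⊆ Icc c d := Icc_subset_Icc hca hbd
  have hint : ∀ {s t : ℝ}, Icc s t ⊆ Icc c d → s ≤ t →
      IntervalIntegrable g' MeasureTheory.volume s t ∧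
      IntervalIntegrable (fun x => g' x ^ 2) MeasureTheory.volume s t := fun hst h => by
    rw [← uIcc_of_le h] at hst
    exact ⟨(hg'.mono hst).intervalIntegrable, ((hg'.pow 2).mono hst).intervalIntegrable⟩
  have hftc : ∫ x in a..b, g' x = g b - g a :=
    intervalIntegral.integral_eq_sub_of_hasDerivAt
      (fun x hx => hg x (hsub (uIcc_of_le hab ▸ hx))) (hint hsub hab).1
  have hmono : ∫ x in a..b, g' x ^ 2 ≤ ∫ x in c..d, g' x ^ 2 :=
    intervalIntegral.integral_mono_interval hca hab hbd
      (Filter.Eventually.of_forall fun x => sq_nonneg _)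
      (hint subset_rfl (hca.trans (hab.trans hbd))).2
  have hnonneg : 0 ≤ ∫ x in a..b, g' x ^ 2 :=
    intervalIntegral.integral_nonneg hab fun x _ => sq_nonneg _
  calc (g b - g a) ^ 2 = (∫ x in a..b, g' x) ^ 2 := by rw [hftc]
    _ ≤ (b - a) * ∫ x in a..b, g' x ^ 2 :=
      sq_intervalIntegral_le_mul_intervalIntegral_sq hab (hint hsub hab).1 (hint hsub hab).2
    _ ≤ (d - c) * ∫ x in c..d, g' x ^ 2 :=
      mul_le_mul (by linarith) hmono hnonneg (by linarith)

/-- **Spatial trace estimate underlying inequality (14).** If `v` is twice continuously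
differentiable on `[0, ℓ]` (with first and second derivatives `v'` and `v''`) and
vanishes at both endpoints, then `v'(0)² ≤ (5ℓ/3) ∫₀^ℓ v''(x)² dx` and
`v'(ℓ)² ≤ (5ℓ/3) ∫₀^ℓ v''(x)² dx`. -/
theorem spatial_trace_estimate
    (ℓ : ℝ) (hℓ : 0 < ℓ) (v v' v'' : ℝ → ℝ)
    (hv' : ∀ x ∈ Icc (0:ℝ) ℓ, HasDerivAt v (v' x) x)
    (hv'' : ∀ x ∈ Icc (0:ℝ) ℓ, HasDerivAt v' (v'' x) x)
    (hcont : ContinuousOn v'' (Icc (0:ℝ) ℓ))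
    (h0 : v 0 = 0) (hl : v ℓ = 0) :
    (v' 0) ^ 2 ≤ (5 * ℓ / 3) * (∫ x in (0:ℝ)..ℓ, (v'' x) ^ 2) ∧
    (v' ℓ) ^ 2 ≤ (5 * ℓ / 3) * (∫ x in (0:ℝ)..ℓ, (v'' x) ^ 2) := by
  obtain ⟨c, ⟨hc0, hcℓ⟩, hv'c⟩ := exists_hasDerivAt_eq_zero hℓ
    (fun x hx => (hv' x hx).continuousAt.continuousWithinAt) (h0.trans hl.symm)
    (fun x hx => hv' x (Ioo_subset_Icc_self hx))
  have hleft := sq_sub_le_mul_intervalIntegral_sq_deriv le_rfl hc0.le hcℓ.le hv'' hcont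
  have hright := sq_sub_le_mul_intervalIntegral_sq_deriv hc0.le hcℓ.le le_rfl hv'' hcont
  have hslack : 0 ≤ ℓ * ∫ x in (0:ℝ)..ℓ, v'' x ^ 2 :=
    mul_nonneg hℓ.le (intervalIntegral.integral_nonneg hℓ.le fun x _ => sq_nonneg _)
  rw [hv'c, sub_zero] at hleft hright
  rw [zero_sub, neg_sq] at hleft
  constructor <;> linarith
end

section
/- Let ℓ, T > 0 and let u : ℝ × ℝ → ℝ be continuous on [0,ℓ] × [0,T] and twice continuously differentiable in the first (space) variable, with u, ∂ₓu, ∂ₓₓu jointly continuous on [0,ℓ] × [0,T]. If u(0,t) = u(ℓ,t) = 0 for all t ∈ [0,T], then ∫₀^T (∂ₓu(0,t))² dt ≤ (5ℓ/3) ∫₀^T ∫₀^ℓ (∂ₓₓu(x,t))² dx dt, and the same bound holds for ∫₀^T (∂ₓu(ℓ,t))² dt. -/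
/-!
Integrating by parts against the weight `ℓ - x` and using `v 0 = v ℓ = 0` gives
`∫₀^ℓ (ℓ - x) v''(x) dx = -ℓ v'(0)`. Cauchy–Schwarz with `∫₀^ℓ (ℓ - x)² dx = ℓ³/3` then yields
`v'(0)² ≤ (ℓ/3) ∫₀^ℓ (v'')²`, already better than `5ℓ/3`; the slope at `ℓ` follows by the
reflection `x ↦ ℓ - x`. Integrating this slice estimate in time only needs continuity of
`t ↦ ∫₀^ℓ uxx(x,t)² dx` on `[0,T]`, obtained by extending `uxx` off the rectangle through the
projections onto `[0,ℓ]` and `[0,T]`.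
-/

open Set MeasureTheory

theorem sq_intervalIntegral_mul_le {a b : ℝ} (hab : a ≤ b) {f g : ℝ → ℝ}
    (hf : ContinuousOn f (Icc a b)) (hg : ContinuousOn g (Icc a b)) :
    (∫ x in a..b, f x * g x) ^ 2 ≤ (∫ x in a..b, f x ^ 2) * ∫ x in a..b, g x ^ 2 := by
  have hfg : IntervalIntegrable (fun x => f x * g x) volume a b :=
    (hf.mul hg).intervalIntegrable_of_Icc hab
  have hf2 : IntervalIntegrable (fun x => f x ^ 2) volume a b :=
    (hf.pow 2).intervalIntegrable_of_Icc hab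
  have hg2 : IntervalIntegrable (fun x => g x ^ 2) volume a b :=
    (hg.pow 2).intervalIntegrable_of_Icc hab
  have hquad : ∀ c : ℝ, 0 ≤ (∫ x in a..b, g x ^ 2) * (c * c)
      + (-2 * ∫ x in a..b, f x * g x) * c + ∫ x in a..b, f x ^ 2 := by
    intro c
    have hexpand : ∫ x in a..b, (f x - c * g x) ^ 2 = (∫ x in a..b, g x ^ 2) * (c * c)
        + (-2 * ∫ x in a..b, f x * g x) * c + ∫ x in a..b, f x ^ 2 := by
      have hsq : ∀ x, (f x - c * g x) ^ 2 = (c * c) * g x ^ 2 + (-2 * c) * (f x * g x) + f x ^ 2 :=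
        fun x => by ring
      simp_rw [hsq]
      rw [intervalIntegral.integral_add ((hg2.const_mul _).add (hfg.const_mul _)) hf2,
        intervalIntegral.integral_add (hg2.const_mul _) (hfg.const_mul _),
        intervalIntegral.integral_const_mul, intervalIntegral.integral_const_mul]
      ring
    exact hexpand ▸ intervalIntegral.integral_nonneg hab fun x _ => sq_nonneg _
  have hdisc := discrim_le_zero hquad
  rw [discrim] at hdisc
  nlinarith

section DirichletSlice

variable {ℓ : ℝ} {v w z : ℝ → ℝ}

theorem integral_sub_mul_eq_neg_mul_of_dirichlet (hℓ : 0 ≤ ℓ)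
    (hw : ∀ x ∈ Icc 0 ℓ, HasDerivAt v (w x) x) (hz : ∀ x ∈ Icc 0 ℓ, HasDerivAt w (z x) x)
    (hzc : ContinuousOn z (Icc 0 ℓ)) (hv0 : v 0 = 0) (hvℓ : v ℓ = 0) :
    ∫ x in 0..ℓ, (ℓ - x) * z x = -(ℓ * w 0) := by
  have hwc : ContinuousOn w (Icc 0 ℓ) := fun x hx => (hz x hx).continuousAt.continuousWithinAt
  have hint_w : ∫ x in 0..ℓ, w x = 0 := by
    rw [intervalIntegral.integral_eq_sub_of_hasDerivAt (fun x hx => hw x (uIcc_of_le hℓ ▸ hx))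
      (hwc.intervalIntegrable_of_Icc hℓ), hv0, hvℓ, sub_zero]
  have hparts := intervalIntegral.integral_mul_deriv_eq_deriv_mul
    (fun x _ => ((hasDerivAt_id x).const_sub ℓ)) (fun x hx => hz x (uIcc_of_le hℓ ▸ hx))
    intervalIntegrable_const (hzc.intervalIntegrable_of_Icc hℓ)
  simp only [neg_one_mul, intervalIntegral.integral_neg, hint_w] at hparts
  simpa using hparts

theorem sq_deriv_zero_le_of_dirichlet (hℓ : 0 < ℓ)
    (hw : ∀ x ∈ Icc 0 ℓ, HasDerivAt v (w x) x) (hz : ∀ x ∈ Icc 0 ℓ, HasDerivAt w (z x) x)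
    (hzc : ContinuousOn z (Icc 0 ℓ)) (hv0 : v 0 = 0) (hvℓ : v ℓ = 0) :
    w 0 ^ 2 ≤ ℓ / 3 * ∫ x in 0..ℓ, z x ^ 2 := by
  have hcs := sq_intervalIntegral_mul_le hℓ.le (f := fun x => ℓ - x) (by fun_prop) hzc
  rw [integral_sub_mul_eq_neg_mul_of_dirichlet hℓ.le hw hz hzc hv0 hvℓ,
    intervalIntegral.integral_comp_sub_left (fun x => x ^ 2)] at hcs
  norm_num [integral_pow] at hcs
  refine le_of_mul_le_mul_left ?_ (pow_pos hℓ 2)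
  linear_combination hcs

theorem sq_deriv_right_le_of_dirichlet (hℓ : 0 < ℓ)
    (hw : ∀ x ∈ Icc 0 ℓ, HasDerivAt v (w x) x) (hz : ∀ x ∈ Icc 0 ℓ, HasDerivAt w (z x) x)
    (hzc : ContinuousOn z (Icc 0 ℓ)) (hv0 : v 0 = 0) (hvℓ : v ℓ = 0) :
    w ℓ ^ 2 ≤ ℓ / 3 * ∫ x in 0..ℓ, z x ^ 2 := by
  have hreflect : MapsTo (fun x => ℓ - x) (Icc 0 ℓ) (Icc 0 ℓ) :=
    fun x hx => ⟨by linarith [hx.2], by linarith [hx.1]⟩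
  have h := sq_deriv_zero_le_of_dirichlet (v := fun x => v (ℓ - x)) (w := fun x => -w (ℓ - x))
    (z := fun x => z (ℓ - x)) hℓ
    (fun x hx => (hw _ (hreflect hx)).comp_const_sub ℓ x)
    (fun x hx => by simpa using ((hz _ (hreflect hx)).comp_const_sub ℓ x).fun_neg)
    (hzc.comp (by fun_prop) hreflect) (by simpa using hvℓ) (by simpa using hv0)
  simpa [intervalIntegral.integral_comp_sub_left (fun x => z x ^ 2)] using h

end DirichletSlice

theorem ContinuousOn.intervalIntegral_prod_Icc {E : Type*} [NormedAddCommGroup E]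
    [NormedSpace ℝ E] {a b c d : ℝ} (hab : a ≤ b) (hcd : c ≤ d) {f : ℝ × ℝ → E}
    (hf : ContinuousOn f (Icc a b ×ˢ Icc c d)) :
    ContinuousOn (fun t => ∫ x in a..b, f (x, t)) (Icc c d) := by
  set g : ℝ × ℝ → E := fun p => f (projIcc a b hab p.1, projIcc c d hcd p.2)
  have hg : Continuous g :=
    hf.comp_continuous (by fun_prop) fun p => ⟨Subtype.mem _, Subtype.mem _⟩
  refine (intervalIntegral.continuous_parametric_intervalIntegral_of_continuous'
    (μ := volume) (f := fun t x => g (x, t)) (by fun_prop) a b).continuousOn.congr fun t ht => ?_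
  refine intervalIntegral.integral_congr fun x hx => ?_
  rw [uIcc_of_le hab] at hx
  simp [g, projIcc_of_mem _ hx, projIcc_of_mem _ ht]

theorem time_integrated_trace_estimate_general
    (ℓ T : ℝ) (hℓ : 0 < ℓ) (hT : 0 < T)
    (u ux uxx : ℝ × ℝ → ℝ)
    (hux : ∀ x ∈ Icc (0:ℝ) ℓ, ∀ t ∈ Icc (0:ℝ) T,
      HasDerivAt (fun y => u (y, t)) (ux (x, t)) x)
    (huxx : ∀ x ∈ Icc (0:ℝ) ℓ, ∀ t ∈ Icc (0:ℝ) T,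
      HasDerivAt (fun y => ux (y, t)) (uxx (x, t)) x)
    (hux_cont : ContinuousOn ux (Icc (0:ℝ) ℓ ×ˢ Icc (0:ℝ) T))
    (huxx_cont : ContinuousOn uxx (Icc (0:ℝ) ℓ ×ˢ Icc (0:ℝ) T))
    (hbc : ∀ t ∈ Icc (0:ℝ) T, u (0, t) = 0 ∧ u (ℓ, t) = 0) :
    (∫ t in (0:ℝ)..T, (ux (0, t)) ^ 2)
      ≤ (5 * ℓ / 3) * (∫ t in (0:ℝ)..T, ∫ x in (0:ℝ)..ℓ, (uxx (x, t)) ^ 2) ∧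
    (∫ t in (0:ℝ)..T, (ux (ℓ, t)) ^ 2)
      ≤ (5 * ℓ / 3) * (∫ t in (0:ℝ)..T, ∫ x in (0:ℝ)..ℓ, (uxx (x, t)) ^ 2) := by
  have hslice_cont (t : ℝ) (ht : t ∈ Icc 0 T) : ContinuousOn (fun x => uxx (x, t)) (Icc 0 ℓ) :=
    huxx_cont.comp (by fun_prop) fun x hx => ⟨hx, ht⟩
  have hS_cont : ContinuousOn (fun t => ∫ x in 0..ℓ, uxx (x, t) ^ 2) (Icc 0 T) :=
    (huxx_cont.pow 2).intervalIntegral_prod_Icc hℓ.le hT.le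
  have hintegrate (c : ℝ) (hc : c ∈ Icc 0 ℓ)
      (hbound : ∀ t ∈ Icc 0 T, ux (c, t) ^ 2 ≤ ℓ / 3 * ∫ x in 0..ℓ, uxx (x, t) ^ 2) :
      ∫ t in 0..T, ux (c, t) ^ 2 ≤ 5 * ℓ / 3 * ∫ t in 0..T, ∫ x in 0..ℓ, uxx (x, t) ^ 2 := by
    rw [← intervalIntegral.integral_const_mul]
    refine intervalIntegral.integral_mono_on hT.le
      (((hux_cont.comp (by fun_prop) fun t ht => ⟨hc, ht⟩).pow 2).intervalIntegrable_of_Icc hT.le)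
      ((hS_cont.const_mul _).intervalIntegrable_of_Icc hT.le) fun t ht => (hbound t ht).trans ?_
    exact mul_le_mul_of_nonneg_right (by linarith)
      (intervalIntegral.integral_nonneg hℓ.le fun x _ => sq_nonneg _)
  exact ⟨hintegrate 0 (left_mem_Icc.2 hℓ.le) fun t ht =>
      sq_deriv_zero_le_of_dirichlet hℓ (hux · · t ht) (huxx · · t ht) (hslice_cont t ht)
        (hbc t ht).1 (hbc t ht).2,
    hintegrate ℓ (right_mem_Icc.2 hℓ.le) fun t ht =>
      sq_deriv_right_le_of_dirichlet hℓ (hux · · t ht) (huxx · · t ht) (hslice_cont t ht)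
        (hbc t ht).1 (hbc t ht).2⟩

/-- **Time-integrated trace estimate (inequality (14)).** If `u(x,t)` is continuous on
`[0,ℓ] × [0,T]`, twice continuously differentiable in the space variable `x` (with
spatial partial derivatives `ux` and `uxx` jointly continuous on `[0,ℓ] × [0,T]`), and
satisfies the Dirichlet conditions `u(0,t) = u(ℓ,t) = 0` for all `t ∈ [0,T]`, then
`∫₀^T (∂ₓu(0,t))² dt ≤ (5ℓ/3) ∫₀^T ∫₀^ℓ (∂ₓₓu(x,t))² dx dt`, and the same bound holds
for the slope at `x = ℓ`. -/
theorem time_integrated_trace_estimate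
    (ℓ T : ℝ) (hℓ : 0 < ℓ) (hT : 0 < T)
    (u ux uxx : ℝ × ℝ → ℝ)
    (hu_cont : ContinuousOn u (Icc (0:ℝ) ℓ ×ˢ Icc (0:ℝ) T))
    (hux : ∀ x ∈ Icc (0:ℝ) ℓ, ∀ t ∈ Icc (0:ℝ) T,
      HasDerivAt (fun y => u (y, t)) (ux (x, t)) x)
    (huxx : ∀ x ∈ Icc (0:ℝ) ℓ, ∀ t ∈ Icc (0:ℝ) T,
      HasDerivAt (fun y => ux (y, t)) (uxx (x, t)) x)
    (hux_cont : ContinuousOn ux (Icc (0:ℝ) ℓ ×ˢ Icc (0:ℝ) T))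
    (huxx_cont : ContinuousOn uxx (Icc (0:ℝ) ℓ ×ˢ Icc (0:ℝ) T))
    (hbc : ∀ t ∈ Icc (0:ℝ) T, u (0, t) = 0 ∧ u (ℓ, t) = 0) :
    (∫ t in (0:ℝ)..T, (ux (0, t)) ^ 2)
      ≤ (5 * ℓ / 3) * (∫ t in (0:ℝ)..T, ∫ x in (0:ℝ)..ℓ, (uxx (x, t)) ^ 2) ∧
    (∫ t in (0:ℝ)..T, (ux (ℓ, t)) ^ 2)
      ≤ (5 * ℓ / 3) * (∫ t in (0:ℝ)..T, ∫ x in (0:ℝ)..ℓ, (uxx (x, t)) ^ 2) :=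
  time_integrated_trace_estimate_general ℓ T hℓ hT u ux uxx hux huxx hux_cont huxx_cont hbc
end

section
/- Let T > 0 and let p : ℝ → ℝ be continuously differentiable on [0, T]. Then for every τ ∈ (0, T], p(τ)² ≤ (2/τ) ∫₀^τ p(η)² dη + (2τ/3) ∫₀^τ p'(η)² dη. -/
/-!
Integrating `(η p(η))' = p(η) + η p'(η)` over `[0, τ]` gives `τ p(τ) = ∫ p + ∫ η p'`. Square with
`(a + b)² ≤ 2a² + 2b²` and apply Cauchy–Schwarz to each integral, against the weights `1` and `η`
(`∫₀^τ η² = τ³/3`); dividing by `τ²` gives the bound.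
-/

open Set MeasureTheory

theorem integral_mul_sq_le_integral_sq_mul_integral_sq {α : Type*} [MeasurableSpace α]
    {μ : Measure α} {f g : α → ℝ} (hf : Integrable (fun x ↦ f x ^ 2) μ)
    (hfg : Integrable (fun x ↦ f x * g x) μ) (hg : Integrable (fun x ↦ g x ^ 2) μ) :
    (∫ x, f x * g x ∂μ) ^ 2 ≤ (∫ x, f x ^ 2 ∂μ) * ∫ x, g x ^ 2 ∂μ := by
  -- `t ↦ ∫ (t f + g)²` is a nonnegative quadratic, so its discriminant is nonpositive.
  have hquad : ∀ t : ℝ, 0 ≤ (∫ x, f x ^ 2 ∂μ) * (t * t) + (2 * ∫ x, f x * g x ∂μ) * t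
      + ∫ x, g x ^ 2 ∂μ := fun t ↦ by
    have hexpand : ∫ x, (t * f x + g x) ^ 2 ∂μ
        = ∫ x, (t ^ 2 * f x ^ 2 + 2 * t * (f x * g x) + g x ^ 2) ∂μ := by
      congr 1; ext x; ring
    calc 0 ≤ ∫ x, (t * f x + g x) ^ 2 ∂μ := integral_nonneg fun x ↦ sq_nonneg _
      _ = _ := by
        have hlin : Integrable (fun x ↦ t ^ 2 * f x ^ 2 + 2 * t * (f x * g x)) μ :=
          (hf.const_mul _).add (hfg.const_mul _)
        rw [hexpand, integral_add hlin hg, integral_add (hf.const_mul _) (hfg.const_mul _),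
          integral_const_mul, integral_const_mul]
        ring
  have := discrim_le_zero hquad
  rw [discrim] at this
  linarith

namespace intervalIntegral

variable {a b : ℝ} {f g : ℝ → ℝ}

theorem integral_mul_sq_le_integral_sq_mul_integral_sq (hab : a ≤ b)
    (hf : IntervalIntegrable (fun x ↦ f x ^ 2) volume a b)
    (hfg : IntervalIntegrable (fun x ↦ f x * g x) volume a b)
    (hg : IntervalIntegrable (fun x ↦ g x ^ 2) volume a b) :
    (∫ x in a..b, f x * g x) ^ 2 ≤ (∫ x in a..b, f x ^ 2) * ∫ x in a..b, g x ^ 2 := by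
  simp only [integral_of_le hab]
  exact _root_.integral_mul_sq_le_integral_sq_mul_integral_sq hf.1 hfg.1 hg.1

theorem sq_integral_le_mul_integral_sq (hab : a ≤ b) (hf : IntervalIntegrable f volume a b)
    (hf2 : IntervalIntegrable (fun x ↦ f x ^ 2) volume a b) :
    (∫ x in a..b, f x) ^ 2 ≤ (b - a) * ∫ x in a..b, f x ^ 2 := by
  have := integral_mul_sq_le_integral_sq_mul_integral_sq (g := fun _ ↦ 1) hab hf2
    (by simpa using hf) intervalIntegrable_const
  simpa [mul_comm (b - a)] using this

theorem sq_integral_id_mul_le (hb : 0 ≤ b) (hf : IntervalIntegrable (fun x ↦ f x ^ 2) volume 0 b)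
    (hxf : IntervalIntegrable (fun x ↦ x * f x) volume 0 b) :
    (∫ x in 0..b, x * f x) ^ 2 ≤ b ^ 3 / 3 * ∫ x in 0..b, f x ^ 2 := by
  have := integral_mul_sq_le_integral_sq_mul_integral_sq hb
    ((continuous_pow 2).intervalIntegrable 0 b) hxf hf
  rw [integral_pow] at this
  norm_num at this
  exact this

theorem mul_sub_mul_eq_integral_add_integral_mul_deriv {p p' : ℝ → ℝ}
    (hp : ∀ x ∈ uIcc a b, HasDerivAt p (p' x) x) (hp' : IntervalIntegrable p' volume a b) :
    b * p b - a * p a = (∫ x in a..b, p x) + ∫ x in a..b, x * p' x := by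
  have := integral_mul_deriv_eq_deriv_mul (fun x _ ↦ hasDerivAt_id' x) hp
    intervalIntegrable_const hp'
  simp only [one_mul] at this
  linarith

end intervalIntegral

theorem boundary_data_inequality_general
    (T : ℝ) (p p' : ℝ → ℝ)
    (hp' : ∀ t ∈ Icc (0:ℝ) T, HasDerivAt p (p' t) t)
    (hcont : ContinuousOn p' (Icc (0:ℝ) T)) :
    ∀ τ ∈ Ioc (0:ℝ) T,
      (p τ) ^ 2 ≤ (2 / τ) * (∫ η in (0:ℝ)..τ, (p η) ^ 2)
        + (2 * τ / 3) * ∫ η in (0:ℝ)..τ, (p' η) ^ 2 := by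
  rintro τ ⟨hτ, hτT⟩
  have hsub : uIcc 0 τ ⊆ Icc 0 T := by
    rw [uIcc_of_le hτ.le]; exact Icc_subset_Icc_right hτT
  have hderiv : ∀ x ∈ uIcc 0 τ, HasDerivAt p (p' x) x := fun x hx ↦ hp' x (hsub hx)
  have hp'c : ContinuousOn p' (uIcc 0 τ) := hcont.mono hsub
  have hpc : ContinuousOn p (uIcc 0 τ) := fun x hx ↦
    (hderiv x hx).continuousAt.continuousWithinAt
  have hparts : τ * p τ = (∫ η in (0:ℝ)..τ, p η) + ∫ η in (0:ℝ)..τ, η * p' η := by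
    simpa using
      intervalIntegral.mul_sub_mul_eq_integral_add_integral_mul_deriv hderiv hp'c.intervalIntegrable
  have hcs_p := intervalIntegral.sq_integral_le_mul_integral_sq hτ.le hpc.intervalIntegrable
    (hpc.pow 2).intervalIntegrable
  rw [sub_zero] at hcs_p
  have hcs_id_p' := intervalIntegral.sq_integral_id_mul_le hτ.le (hp'c.pow 2).intervalIntegrable
    (continuousOn_id.mul hp'c).intervalIntegrable
  have hscaled : τ ^ 2 * p τ ^ 2 ≤ τ ^ 2 * ((2 / τ) * (∫ η in (0:ℝ)..τ, (p η) ^ 2)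
      + (2 * τ / 3) * ∫ η in (0:ℝ)..τ, (p' η) ^ 2) := by
    calc τ ^ 2 * p τ ^ 2 = (τ * p τ) ^ 2 := by ring
      _ ≤ 2 * ((∫ η in (0:ℝ)..τ, p η) ^ 2 + (∫ η in (0:ℝ)..τ, η * p' η) ^ 2) :=
        hparts ▸ add_sq_le
      _ ≤ 2 * (τ * (∫ η in (0:ℝ)..τ, (p η) ^ 2)
          + τ ^ 3 / 3 * ∫ η in (0:ℝ)..τ, (p' η) ^ 2) := by gcongr
      _ = _ := by field_simp
  exact le_of_mul_le_mul_left hscaled (by positivity)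

/-- **Boundary-data inequality from the proof of Lemma 5.** If `p` is continuously
differentiable on `[0, T]` (with derivative `p'`), then for every `τ ∈ (0, T]`,
`p(τ)² ≤ (2/τ) ∫₀^τ p(η)² dη + (2τ/3) ∫₀^τ p'(η)² dη`. -/
theorem boundary_data_inequality
    (T : ℝ) (hT : 0 < T) (p p' : ℝ → ℝ)
    (hp' : ∀ t ∈ Icc (0:ℝ) T, HasDerivAt p (p' t) t)
    (hcont : ContinuousOn p' (Icc (0:ℝ) T)) :
    ∀ τ ∈ Ioc (0:ℝ) T,
      (p τ) ^ 2 ≤ (2 / τ) * (∫ η in (0:ℝ)..τ, (p η) ^ 2)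
        + (2 * τ / 3) * ∫ η in (0:ℝ)..τ, (p' η) ^ 2 :=
  boundary_data_inequality_general T p p' hp' hcont
end

section
/- Let u be a classical solution of the forward problem. Then for every t ∈ [0, T], the energy identity ∫₀^ℓ [ρ_A(x) (∂ₜu(x,t))² + r(x) (∂ₓₓu(x,t))² + T_r(x) (∂ₓu(x,t))²] dx + 2 ∫₀^t ∫₀^ℓ [μ(x) (∂ₜu(x,τ))² + κ(x) (∂ₓₓ∂ₜu(x,τ))²] dx dτ = 2 ∫₀^t ∫₀^ℓ F(x,τ) ∂ₜu(x,τ) dx dτ holds. -/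
/-! Multiplying the equation by `2 uₜ` and integrating over `(0, ℓ)`, two integrations by parts
turn the tension and bending terms into the time derivative of `T_r uₓ² + r uₓₓ²` plus the
Kelvin–Voigt dissipation `2 κ uₓₓₜ²`. The boundary term `2 uₜ (T_r uₓ - Bₓ) + 2 uₓₜ B`, with `B` the
bending moment, vanishes at `x = 0, ℓ` because `u` and `B` do. Integrating in time, starting from
the zero energy density at `t = 0`, and exchanging the order of integration gives the identity. -/

open Set

/-- A classical solution of the forward problem for the damped Euler–Bernoulli beam
equation `ρ_A(x) uₜₜ + μ(x) uₜ − (T_r(x) uₓ)ₓ + (r(x) uₓₓ + κ(x) uₓₓₜ)ₓₓ = F(x,t)` on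
`(0,ℓ) × (0,T)`, with homogeneous initial conditions and simply supported boundary
conditions.  The fields `ux, uxx, ut, utt, uxt, uxxt` are the partial derivatives of
`u`, `Ax` is the spatial derivative of `T_r(x) uₓ`, and `Bx, Bxx` are the first and
second spatial derivatives of the bending moment `B(x,t) = r(x) uₓₓ + κ(x) uₓₓₜ`. -/
structure ForwardSol (ℓ T : ℝ) (ρA μ Tr r κ : ℝ → ℝ) (F : ℝ → ℝ → ℝ) where
  u : ℝ → ℝ → ℝ
  ux : ℝ → ℝ → ℝ
  uxx : ℝ → ℝ → ℝ
  ut : ℝ → ℝ → ℝ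
  utt : ℝ → ℝ → ℝ
  uxt : ℝ → ℝ → ℝ
  uxxt : ℝ → ℝ → ℝ
  Ax : ℝ → ℝ → ℝ
  Bx : ℝ → ℝ → ℝ
  Bxx : ℝ → ℝ → ℝ
  smooth : ContDiffOn ℝ (⊤ : ℕ∞) (fun p : ℝ × ℝ => u p.1 p.2) (Icc 0 ℓ ×ˢ Icc 0 T)
  hux : ∀ x ∈ Icc (0:ℝ) ℓ, ∀ t ∈ Icc (0:ℝ) T, HasDerivAt (fun y => u y t) (ux x t) x
  huxx : ∀ x ∈ Icc (0:ℝ) ℓ, ∀ t ∈ Icc (0:ℝ) T, HasDerivAt (fun y => ux y t) (uxx x t) x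
  hut : ∀ x ∈ Icc (0:ℝ) ℓ, ∀ t ∈ Icc (0:ℝ) T, HasDerivAt (fun s => u x s) (ut x t) t
  hutt : ∀ x ∈ Icc (0:ℝ) ℓ, ∀ t ∈ Icc (0:ℝ) T, HasDerivAt (fun s => ut x s) (utt x t) t
  huxt : ∀ x ∈ Icc (0:ℝ) ℓ, ∀ t ∈ Icc (0:ℝ) T, HasDerivAt (fun s => ux x s) (uxt x t) t
  huxxt : ∀ x ∈ Icc (0:ℝ) ℓ, ∀ t ∈ Icc (0:ℝ) T, HasDerivAt (fun s => uxx x s) (uxxt x t) t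
  hAx : ∀ x ∈ Icc (0:ℝ) ℓ, ∀ t ∈ Icc (0:ℝ) T,
    HasDerivAt (fun y => Tr y * ux y t) (Ax x t) x
  hBx : ∀ x ∈ Icc (0:ℝ) ℓ, ∀ t ∈ Icc (0:ℝ) T,
    HasDerivAt (fun y => r y * uxx y t + κ y * uxxt y t) (Bx x t) x
  hBxx : ∀ x ∈ Icc (0:ℝ) ℓ, ∀ t ∈ Icc (0:ℝ) T, HasDerivAt (fun y => Bx y t) (Bxx x t) x
  cont_ux : ContinuousOn (fun p : ℝ × ℝ => ux p.1 p.2) (Icc 0 ℓ ×ˢ Icc 0 T)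
  cont_uxx : ContinuousOn (fun p : ℝ × ℝ => uxx p.1 p.2) (Icc 0 ℓ ×ˢ Icc 0 T)
  cont_ut : ContinuousOn (fun p : ℝ × ℝ => ut p.1 p.2) (Icc 0 ℓ ×ˢ Icc 0 T)
  cont_utt : ContinuousOn (fun p : ℝ × ℝ => utt p.1 p.2) (Icc 0 ℓ ×ˢ Icc 0 T)
  cont_uxt : ContinuousOn (fun p : ℝ × ℝ => uxt p.1 p.2) (Icc 0 ℓ ×ˢ Icc 0 T)
  cont_uxxt : ContinuousOn (fun p : ℝ × ℝ => uxxt p.1 p.2) (Icc 0 ℓ ×ˢ Icc 0 T)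
  cont_Ax : ContinuousOn (fun p : ℝ × ℝ => Ax p.1 p.2) (Icc 0 ℓ ×ˢ Icc 0 T)
  cont_Bx : ContinuousOn (fun p : ℝ × ℝ => Bx p.1 p.2) (Icc 0 ℓ ×ˢ Icc 0 T)
  cont_Bxx : ContinuousOn (fun p : ℝ × ℝ => Bxx p.1 p.2) (Icc 0 ℓ ×ˢ Icc 0 T)
  pde : ∀ x ∈ Ioo (0:ℝ) ℓ, ∀ t ∈ Ioo (0:ℝ) T,
    ρA x * utt x t + μ x * ut x t - Ax x t + Bxx x t = F x t
  init_u : ∀ x ∈ Ioo (0:ℝ) ℓ, u x 0 = 0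
  init_ut : ∀ x ∈ Ioo (0:ℝ) ℓ, ut x 0 = 0
  bc_u0 : ∀ t ∈ Icc (0:ℝ) T, u 0 t = 0
  bc_ul : ∀ t ∈ Icc (0:ℝ) T, u ℓ t = 0
  bc_m0 : ∀ t ∈ Icc (0:ℝ) T, r 0 * uxx 0 t + κ 0 * uxxt 0 t = 0
  bc_ml : ∀ t ∈ Icc (0:ℝ) T, r ℓ * uxx ℓ t + κ ℓ * uxxt ℓ t = 0

open Filter Topology Function MeasureTheory

theorem HasDerivAt.eq_zero_of_eventuallyEq_zero {f : ℝ → ℝ} {f' x : ℝ} (hf : HasDerivAt f f' x)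
    (h : f =ᶠ[𝓝 x] 0) : f' = 0 :=
  hf.unique ((hasDerivAt_const x 0).congr_of_eventuallyEq h)

section PartialDerivatives

variable {E : Type*} [NormedAddCommGroup E] [NormedSpace ℝ E]

theorem HasFDerivAt.hasDerivAt_slice_fst {φ : ℝ × ℝ → E} {φ' : ℝ × ℝ →L[ℝ] E} {p : ℝ × ℝ}
    (h : HasFDerivAt φ φ' p) : HasDerivAt (fun y => φ (y, p.2)) (φ' (1, 0)) p.1 :=
  h.comp_hasDerivAt p.1 ((hasDerivAt_id p.1).prodMk (hasDerivAt_const p.1 p.2))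

theorem HasFDerivAt.hasDerivAt_slice_snd {φ : ℝ × ℝ → E} {φ' : ℝ × ℝ →L[ℝ] E} {p : ℝ × ℝ}
    (h : HasFDerivAt φ φ' p) : HasDerivAt (fun s => φ (p.1, s)) (φ' (0, 1)) p.2 :=
  h.comp_hasDerivAt p.2 ((hasDerivAt_const p.2 p.1).prodMk (hasDerivAt_id p.2))

theorem Filter.Eventually.slice_fst {P : ℝ × ℝ → Prop} {x t : ℝ} (h : ∀ᶠ q in 𝓝 (x, t), P q) :
    ∀ᶠ y in 𝓝 x, P (y, t) :=
  ((Continuous.prodMk_left t).tendsto x).eventually h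

theorem Filter.Eventually.slice_snd {P : ℝ × ℝ → Prop} {x t : ℝ} (h : ∀ᶠ q in 𝓝 (x, t), P q) :
    ∀ᶠ s in 𝓝 t, P (x, s) :=
  ((Continuous.prodMk_right x).tendsto t).eventually h

end PartialDerivatives

theorem ContDiffAt.eventually_differentiableAt {E F : Type*} [NormedAddCommGroup E]
    [NormedSpace ℝ E] [NormedAddCommGroup F] [NormedSpace ℝ F] {f : E → F} {x : E} {n : ℕ}
    (hf : ContDiffAt ℝ (n + 1) f x) : ∀ᶠ y in 𝓝 x, DifferentiableAt ℝ f y := by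
  filter_upwards [hf.eventually (by simp)] with y hy
  exact hy.differentiableAt (by simp)

section MixedPartials

variable {g gx gt : ℝ → ℝ → ℝ} {p : ℝ × ℝ}

theorem eventually_partial_fst_eq_fderiv
    (hg : ∀ᶠ q in 𝓝 p, DifferentiableAt ℝ (uncurry g) q)
    (hgx : ∀ᶠ q in 𝓝 p, HasDerivAt (fun y => g y q.2) (gx q.1 q.2) q.1) :
    ∀ᶠ q in 𝓝 p, gx q.1 q.2 = fderiv ℝ (uncurry g) q (1, 0) := by
  filter_upwards [hg, hgx] with q hgq hgxq
  exact hgxq.unique hgq.hasFDerivAt.hasDerivAt_slice_fst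

theorem eventually_partial_snd_eq_fderiv
    (hg : ∀ᶠ q in 𝓝 p, DifferentiableAt ℝ (uncurry g) q)
    (hgt : ∀ᶠ q in 𝓝 p, HasDerivAt (g q.1) (gt q.1 q.2) q.2) :
    ∀ᶠ q in 𝓝 p, gt q.1 q.2 = fderiv ℝ (uncurry g) q (0, 1) := by
  filter_upwards [hg, hgt] with q hgq hgtq
  exact hgtq.unique hgq.hasFDerivAt.hasDerivAt_slice_snd

theorem ContDiffAt.partial_fst {n : ℕ} (hg : ContDiffAt ℝ (n + 1) (uncurry g) p)
    (hgx : ∀ᶠ q in 𝓝 p, HasDerivAt (fun y => g y q.2) (gx q.1 q.2) q.1) :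
    ContDiffAt ℝ n (uncurry gx) p :=
  ((hg.fderiv_right le_rfl).clm_apply contDiffAt_const).congr_of_eventuallyEq
    (eventually_partial_fst_eq_fderiv hg.eventually_differentiableAt hgx)

theorem ContDiffAt.hasDerivAt_partial_comm {x t gxt : ℝ} (hg : ContDiffAt ℝ 2 (uncurry g) (x, t))
    (hgx : ∀ᶠ q in 𝓝 (x, t), HasDerivAt (fun y => g y q.2) (gx q.1 q.2) q.1)
    (hgt : ∀ᶠ q in 𝓝 (x, t), HasDerivAt (g q.1) (gt q.1 q.2) q.2)
    (hgxt : HasDerivAt (gx x) gxt t) :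
    HasDerivAt (fun y => gt y t) gxt x := by
  set D := fderiv ℝ (uncurry g)
  have hdiff := hg.eventually_differentiableAt (n := 1)
  have hD : HasFDerivAt D (fderiv ℝ D (x, t)) (x, t) :=
    ((hg.fderiv_right (m := 1) (by norm_num)).differentiableAt one_ne_zero).hasFDerivAt
  have hDt : HasDerivAt (fun s => D (x, s) (1, 0)) (fderiv ℝ D (x, t) (0, 1) (1, 0)) t := by
    simpa using hD.hasDerivAt_slice_snd.clm_apply (hasDerivAt_const t ((1 : ℝ), (0 : ℝ)))
  have hDx : HasDerivAt (fun y => D (y, t) (0, 1)) (fderiv ℝ D (x, t) (1, 0) (0, 1)) x := by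
    simpa using hD.hasDerivAt_slice_fst.clm_apply (hasDerivAt_const x ((0 : ℝ), (1 : ℝ)))
  have hgxt_eq : gxt = fderiv ℝ D (x, t) (0, 1) (1, 0) :=
    hgxt.unique (hDt.congr_of_eventuallyEq
      (eventually_partial_fst_eq_fderiv hdiff hgx).slice_snd)
  rw [hgxt_eq, hg.isSymmSndFDerivAt (by simp)]
  exact hDx.congr_of_eventuallyEq (eventually_partial_snd_eq_fderiv hdiff hgt).slice_fst

end MixedPartials

theorem Icc_prod_Icc_mem_nhds {a b c d x t : ℝ} (hx : x ∈ Ioo a b) (ht : t ∈ Ioo c d) :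
    Icc a b ×ˢ Icc c d ∈ 𝓝 (x, t) :=
  prod_mem_nhds (Icc_mem_nhds hx.1 hx.2) (Icc_mem_nhds ht.1 ht.2)

theorem ContinuousOn.comp_fst_prod {α β γ : Type*} [TopologicalSpace α] [TopologicalSpace β]
    [TopologicalSpace γ] {c : α → γ} {s : Set α} (hc : ContinuousOn c s) (s' : Set β) :
    ContinuousOn (fun p : α × β => c p.1) (s ×ˢ s') :=
  hc.comp continuousOn_fst fun _ hp => hp.1

section Integration

variable {a b c d : ℝ}

theorem ContinuousOn.integrable_uncurry_restrict_prod {f : ℝ → ℝ → ℝ}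
    (hf : ContinuousOn (uncurry f) (Icc a b ×ˢ Icc c d)) :
    Integrable (uncurry f) ((volume.restrict (Ioc a b)).prod (volume.restrict (Ioc c d))) := by
  rw [Measure.prod_restrict]
  exact (hf.integrableOn_compact (isCompact_Icc.prod isCompact_Icc)).mono_set
    (prod_mono Ioc_subset_Icc_self Ioc_subset_Icc_self)

theorem ContinuousOn.intervalIntegral_swap {f : ℝ → ℝ → ℝ} (hab : a ≤ b) (hcd : c ≤ d)
    (hf : ContinuousOn (uncurry f) (Icc a b ×ˢ Icc c d)) :
    ∫ x in a..b, ∫ y in c..d, f x y = ∫ y in c..d, ∫ x in a..b, f x y := by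
  simp only [intervalIntegral.integral_of_le hab, intervalIntegral.integral_of_le hcd]
  exact integral_integral_swap hf.integrable_uncurry_restrict_prod

theorem ContinuousOn.intervalIntegrable_intervalIntegral {f : ℝ → ℝ → ℝ} (hab : a ≤ b)
    (hcd : c ≤ d) (hf : ContinuousOn (uncurry f) (Icc a b ×ˢ Icc c d)) :
    IntervalIntegrable (fun y => ∫ x in a..b, f x y) volume c d := by
  rw [intervalIntegrable_iff_integrableOn_Ioc_of_le hcd]
  refine hf.integrable_uncurry_restrict_prod.swap.integral_prod_left.congr
    (Eventually.of_forall fun y => ?_)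
  simp [intervalIntegral.integral_of_le hab]

theorem integral_sub_eq_integral_integral_of_hasDerivAt {e e' : ℝ → ℝ → ℝ} (hab : a ≤ b)
    (hcd : c ≤ d) (he : ∀ x ∈ Icc a b, ∀ τ ∈ Icc c d, HasDerivAt (e x) (e' x τ) τ)
    (he' : ContinuousOn (uncurry e') (Icc a b ×ˢ Icc c d)) :
    ∫ x in a..b, (e x d - e x c) = ∫ τ in c..d, ∫ x in a..b, e' x τ := by
  rw [← he'.intervalIntegral_swap hab hcd]
  refine intervalIntegral.integral_congr fun x hx => ?_
  rw [uIcc_of_le hab] at hx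
  refine (intervalIntegral.integral_eq_sub_of_hasDerivAt (fun τ hτ => he x hx τ ?_) ?_).symm
  · rwa [uIcc_of_le hcd] at hτ
  · exact (he'.uncurry_left x hx).intervalIntegrable_of_Icc hcd

end Integration

namespace ForwardSol

variable {ℓ T : ℝ} {ρA μ Tr r κ : ℝ → ℝ} {F : ℝ → ℝ → ℝ} (sol : ForwardSol ℓ T ρA μ Tr r κ F)

def energyDensity (x t : ℝ) : ℝ :=
  ρA x * sol.ut x t ^ 2 + r x * sol.uxx x t ^ 2 + Tr x * sol.ux x t ^ 2

def energyRate (x t : ℝ) : ℝ :=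
  2 * (ρA x * sol.ut x t * sol.utt x t + r x * sol.uxx x t * sol.uxxt x t
    + Tr x * sol.ux x t * sol.uxt x t)

def dissipation (x t : ℝ) : ℝ :=
  μ x * sol.ut x t ^ 2 + κ x * sol.uxxt x t ^ 2

def flux (x t : ℝ) : ℝ :=
  2 * sol.ut x t * (Tr x * sol.ux x t - sol.Bx x t)
    + 2 * sol.uxt x t * (r x * sol.uxx x t + κ x * sol.uxxt x t)

variable {x t : ℝ}

theorem contDiffAt_u (n : ℕ) (hx : x ∈ Ioo 0 ℓ) (ht : t ∈ Ioo 0 T) :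
    ContDiffAt ℝ n (uncurry sol.u) (x, t) :=
  (sol.smooth.contDiffAt (Icc_prod_Icc_mem_nhds hx ht)).of_le (by exact_mod_cast le_top)

/- The structure gives `uxt` as `∂ₜ uₓ` and `uxxt` as `∂ₜ uₓₓ`; integrating by parts in `x`
needs them as `∂ₓ uₜ` and `∂ₓ uₓₜ`. -/
theorem hasDerivAt_ut_fst (hx : x ∈ Ioo 0 ℓ) (ht : t ∈ Ioo 0 T) :
    HasDerivAt (fun y => sol.ut y t) (sol.uxt x t) x :=
  have hnhds := Icc_prod_Icc_mem_nhds hx ht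
  (sol.contDiffAt_u 2 hx ht).hasDerivAt_partial_comm
    (Filter.mem_of_superset hnhds fun q hq => sol.hux q.1 hq.1 q.2 hq.2)
    (Filter.mem_of_superset hnhds fun q hq => sol.hut q.1 hq.1 q.2 hq.2)
    (sol.huxt x (Ioo_subset_Icc_self hx) t (Ioo_subset_Icc_self ht))

theorem hasDerivAt_uxt_fst (hx : x ∈ Ioo 0 ℓ) (ht : t ∈ Ioo 0 T) :
    HasDerivAt (fun y => sol.uxt y t) (sol.uxxt x t) x :=
  have hnhds := Icc_prod_Icc_mem_nhds hx ht
  ((sol.contDiffAt_u 3 hx ht).partial_fst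
      (Filter.mem_of_superset hnhds fun q hq => sol.hux q.1 hq.1 q.2 hq.2)).hasDerivAt_partial_comm
    (Filter.mem_of_superset hnhds fun q hq => sol.huxx q.1 hq.1 q.2 hq.2)
    (Filter.mem_of_superset hnhds fun q hq => sol.huxt q.1 hq.1 q.2 hq.2)
    (sol.huxxt x (Ioo_subset_Icc_self hx) t (Ioo_subset_Icc_self ht))

theorem ut_eq_zero_of_forall_u_eq_zero (hx : x ∈ Icc 0 ℓ) (hu : ∀ s ∈ Icc 0 T, sol.u x s = 0)
    (ht : t ∈ Ioo 0 T) : sol.ut x t = 0 :=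
  (sol.hut x hx t (Ioo_subset_Icc_self ht)).eq_zero_of_eventuallyEq_zero
    (Filter.mem_of_superset (Icc_mem_nhds ht.1 ht.2) hu)

theorem energyDensity_init (hT : 0 ≤ T) (hx : x ∈ Ioo 0 ℓ) : sol.energyDensity x 0 = 0 := by
  have h0 : (0 : ℝ) ∈ Icc 0 T := ⟨le_rfl, hT⟩
  have hux : ∀ y ∈ Ioo 0 ℓ, sol.ux y 0 = 0 := fun y hy =>
    (sol.hux y (Ioo_subset_Icc_self hy) 0 h0).eq_zero_of_eventuallyEq_zero
      (Filter.mem_of_superset (Ioo_mem_nhds hy.1 hy.2) sol.init_u)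
  have huxx : sol.uxx x 0 = 0 :=
    (sol.huxx x (Ioo_subset_Icc_self hx) 0 h0).eq_zero_of_eventuallyEq_zero
      (Filter.mem_of_superset (Ioo_mem_nhds hx.1 hx.2) hux)
  simp [energyDensity, sol.init_ut x hx, hux x hx, huxx]

theorem hasDerivAt_energyDensity (hx : x ∈ Icc 0 ℓ) (ht : t ∈ Icc 0 T) :
    HasDerivAt (sol.energyDensity x) (sol.energyRate x t) t := by
  have hρ := ((sol.hutt x hx t ht).pow 2).const_mul (ρA x)
  have hr := ((sol.huxxt x hx t ht).pow 2).const_mul (r x)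
  have hTr := ((sol.huxt x hx t ht).pow 2).const_mul (Tr x)
  refine ((hρ.add hr).add hTr).congr_deriv ?_
  simp only [energyRate]
  ring

theorem hasDerivAt_flux (hx : x ∈ Ioo 0 ℓ) (ht : t ∈ Ioo 0 T) :
    HasDerivAt (fun y => sol.flux y t)
      (sol.energyRate x t - 2 * (F x t * sol.ut x t) + 2 * sol.dissipation x t) x := by
  have hx' := Ioo_subset_Icc_self hx
  have ht' := Ioo_subset_Icc_self ht
  have hut := (sol.hasDerivAt_ut_fst hx ht).const_mul (2 : ℝ)
  have huxt := (sol.hasDerivAt_uxt_fst hx ht).const_mul (2 : ℝ)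
  refine ((hut.mul ((sol.hAx x hx' t ht').sub (sol.hBxx x hx' t ht'))).add
    (huxt.mul (sol.hBx x hx' t ht'))).congr_deriv ?_
  simp only [energyRate, dissipation, Pi.sub_apply]
  linear_combination (-2 * sol.ut x t) * sol.pde x hx t ht

theorem continuousOn_energyRate (hρA : ContinuousOn ρA (Icc 0 ℓ)) (hr : ContinuousOn r (Icc 0 ℓ))
    (hTr : ContinuousOn Tr (Icc 0 ℓ)) :
    ContinuousOn (uncurry sol.energyRate) (Icc 0 ℓ ×ˢ Icc 0 T) :=
  continuousOn_const.mul
    ((((hρA.comp_fst_prod _).mul sol.cont_ut).mul sol.cont_utt).add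
      (((hr.comp_fst_prod _).mul sol.cont_uxx).mul sol.cont_uxxt) |>.add
      (((hTr.comp_fst_prod _).mul sol.cont_ux).mul sol.cont_uxt))

theorem continuousOn_dissipation (hμ : ContinuousOn μ (Icc 0 ℓ)) (hκ : ContinuousOn κ (Icc 0 ℓ)) :
    ContinuousOn (uncurry sol.dissipation) (Icc 0 ℓ ×ˢ Icc 0 T) :=
  ((hμ.comp_fst_prod _).mul (sol.cont_ut.pow 2)).add
    ((hκ.comp_fst_prod _).mul (sol.cont_uxxt.pow 2))

theorem continuousOn_flux (hTr : ContinuousOn Tr (Icc 0 ℓ)) (hr : ContinuousOn r (Icc 0 ℓ))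
    (hκ : ContinuousOn κ (Icc 0 ℓ)) :
    ContinuousOn (uncurry sol.flux) (Icc 0 ℓ ×ˢ Icc 0 T) :=
  ((continuousOn_const.mul sol.cont_ut).mul
      (((hTr.comp_fst_prod _).mul sol.cont_ux).sub sol.cont_Bx)).add
    ((continuousOn_const.mul sol.cont_uxt).mul
      (((hr.comp_fst_prod _).mul sol.cont_uxx).add ((hκ.comp_fst_prod _).mul sol.cont_uxxt)))

theorem integral_energyRate (hρA : ContinuousOn ρA (Icc 0 ℓ)) (hμ : ContinuousOn μ (Icc 0 ℓ))
    (hTr : ContinuousOn Tr (Icc 0 ℓ)) (hr : ContinuousOn r (Icc 0 ℓ))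
    (hκ : ContinuousOn κ (Icc 0 ℓ)) (hF : ContinuousOn (uncurry F) (Icc 0 ℓ ×ˢ Icc 0 T))
    (hℓ : 0 ≤ ℓ) (ht : t ∈ Ioo 0 T) :
    ∫ x in 0..ℓ, sol.energyRate x t
      = 2 * (∫ x in 0..ℓ, F x t * sol.ut x t) - 2 * ∫ x in 0..ℓ, sol.dissipation x t := by
  have ht' := Ioo_subset_Icc_self ht
  have slice : ∀ {f : ℝ → ℝ → ℝ}, ContinuousOn (uncurry f) (Icc 0 ℓ ×ˢ Icc 0 T) →
      IntervalIntegrable (fun x => f x t) volume 0 ℓ :=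
    fun hf => (hf.uncurry_right t ht').intervalIntegrable_of_Icc hℓ
  have hrate := slice (sol.continuousOn_energyRate hρA hr hTr)
  have hFu := slice (f := fun x t => F x t * sol.ut x t) (hF.mul sol.cont_ut)
  have hdiss := slice (sol.continuousOn_dissipation hμ hκ)
  have hflux : ∫ x in 0..ℓ, (sol.energyRate x t - 2 * (F x t * sol.ut x t)
      + 2 * sol.dissipation x t) = 0 := by
    rw [intervalIntegral.integral_eq_sub_of_hasDeriv_right_of_le hℓ
      ((sol.continuousOn_flux hTr hr hκ).uncurry_right t ht')
      (fun x hx => (sol.hasDerivAt_flux hx ht).hasDerivWithinAt)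
      ((hrate.sub (hFu.const_mul 2)).add (hdiss.const_mul 2))]
    simp [flux, sol.ut_eq_zero_of_forall_u_eq_zero ⟨le_rfl, hℓ⟩ sol.bc_u0 ht,
      sol.ut_eq_zero_of_forall_u_eq_zero ⟨hℓ, le_rfl⟩ sol.bc_ul ht, sol.bc_m0 t ht',
      sol.bc_ml t ht']
  rw [intervalIntegral.integral_add (hrate.sub (hFu.const_mul 2)) (hdiss.const_mul 2),
    intervalIntegral.integral_sub hrate (hFu.const_mul 2), intervalIntegral.integral_const_mul,
    intervalIntegral.integral_const_mul] at hflux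
  linarith

end ForwardSol

theorem energy_identity_general
    (ℓ T : ℝ) (hℓ : 0 < ℓ)
    (ρA μ Tr r κ : ℝ → ℝ) (F : ℝ → ℝ → ℝ)
    (hρA : ContDiffOn ℝ (⊤ : ℕ∞) ρA (Icc 0 ℓ))
    (hμ : ContDiffOn ℝ (⊤ : ℕ∞) μ (Icc 0 ℓ))
    (hTr : ContDiffOn ℝ (⊤ : ℕ∞) Tr (Icc 0 ℓ))
    (hr : ContDiffOn ℝ (⊤ : ℕ∞) r (Icc 0 ℓ))
    (hκ : ContDiffOn ℝ (⊤ : ℕ∞) κ (Icc 0 ℓ))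
    (hF : ContinuousOn (fun p : ℝ × ℝ => F p.1 p.2) (Icc 0 ℓ ×ˢ Icc 0 T))
    (sol : ForwardSol ℓ T ρA μ Tr r κ F) :
    ∀ t ∈ Icc (0:ℝ) T,
      (∫ x in (0:ℝ)..ℓ,
          (ρA x * (sol.ut x t) ^ 2 + r x * (sol.uxx x t) ^ 2 + Tr x * (sol.ux x t) ^ 2))
        + 2 * (∫ τ in (0:ℝ)..t, ∫ x in (0:ℝ)..ℓ,
            (μ x * (sol.ut x τ) ^ 2 + κ x * (sol.uxxt x τ) ^ 2))
        = 2 * ∫ τ in (0:ℝ)..t, ∫ x in (0:ℝ)..ℓ, F x τ * sol.ut x τ := by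
  rintro t ⟨ht0, htT⟩
  have hsub : Icc 0 ℓ ×ˢ Icc 0 t ⊆ Icc 0 ℓ ×ˢ Icc 0 T := prod_mono le_rfl (Icc_subset_Icc_right htT)
  have henergy : ∫ x in 0..ℓ, sol.energyDensity x t
      = ∫ τ in 0..t, ∫ x in 0..ℓ, sol.energyRate x τ := by
    rw [← integral_sub_eq_integral_integral_of_hasDerivAt hℓ.le ht0
      (fun x hx τ hτ => sol.hasDerivAt_energyDensity hx ⟨hτ.1, hτ.2.trans htT⟩)
      ((sol.continuousOn_energyRate hρA.continuousOn hr.continuousOn hTr.continuousOn).mono hsub)]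
    refine intervalIntegral.integral_congr_Ioo_of_le hℓ.le fun x hx => ?_
    rw [sol.energyDensity_init (ht0.trans htT) hx, sub_zero]
  have hFu := ContinuousOn.intervalIntegrable_intervalIntegral (f := fun x τ => F x τ * sol.ut x τ)
    hℓ.le ht0 ((hF.mul sol.cont_ut).mono hsub)
  have hdiss := ContinuousOn.intervalIntegrable_intervalIntegral hℓ.le ht0
    ((sol.continuousOn_dissipation hμ.continuousOn hκ.continuousOn).mono hsub)
  rw [intervalIntegral.integral_congr_Ioo_of_le ht0 fun τ hτ =>
      sol.integral_energyRate hρA.continuousOn hμ.continuousOn hTr.continuousOn hr.continuousOn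
        hκ.continuousOn hF hℓ.le ⟨hτ.1, hτ.2.trans_le htT⟩,
    intervalIntegral.integral_sub (hFu.const_mul 2) (hdiss.const_mul 2),
    intervalIntegral.integral_const_mul, intervalIntegral.integral_const_mul] at henergy
  exact eq_sub_iff_add_eq.mp henergy

/-- **Energy identity (7).** -/
theorem energy_identity
    (ℓ T ρ₀ r₀ κ₀ : ℝ) (hℓ : 0 < ℓ) (hT : 0 < T)
    (hρ₀ : 0 < ρ₀) (hr₀ : 0 < r₀) (hκ₀ : 0 < κ₀)
    (ρA μ Tr r κ : ℝ → ℝ) (F : ℝ → ℝ → ℝ)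
    (hρA : ContDiffOn ℝ (⊤ : ℕ∞) ρA (Icc 0 ℓ))
    (hμ : ContDiffOn ℝ (⊤ : ℕ∞) μ (Icc 0 ℓ))
    (hTr : ContDiffOn ℝ (⊤ : ℕ∞) Tr (Icc 0 ℓ))
    (hr : ContDiffOn ℝ (⊤ : ℕ∞) r (Icc 0 ℓ))
    (hκ : ContDiffOn ℝ (⊤ : ℕ∞) κ (Icc 0 ℓ))
    (hρAb : ∀ x ∈ Icc (0:ℝ) ℓ, ρ₀ ≤ ρA x)
    (hμb : ∀ x ∈ Icc (0:ℝ) ℓ, 0 ≤ μ x)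
    (hTrb : ∀ x ∈ Icc (0:ℝ) ℓ, 0 ≤ Tr x)
    (hrb : ∀ x ∈ Icc (0:ℝ) ℓ, r₀ ≤ r x)
    (hκb : ∀ x ∈ Icc (0:ℝ) ℓ, κ₀ ≤ κ x)
    (hF : ContinuousOn (fun p : ℝ × ℝ => F p.1 p.2) (Icc 0 ℓ ×ˢ Icc 0 T))
    (sol : ForwardSol ℓ T ρA μ Tr r κ F) :
    ∀ t ∈ Icc (0:ℝ) T,
      (∫ x in (0:ℝ)..ℓ,
          (ρA x * (sol.ut x t) ^ 2 + r x * (sol.uxx x t) ^ 2 + Tr x * (sol.ux x t) ^ 2))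
        + 2 * (∫ τ in (0:ℝ)..t, ∫ x in (0:ℝ)..ℓ,
            (μ x * (sol.ut x τ) ^ 2 + κ x * (sol.uxxt x τ) ^ 2))
        = 2 * ∫ τ in (0:ℝ)..t, ∫ x in (0:ℝ)..ℓ, F x τ * sol.ut x τ :=
  energy_identity_general ℓ T hℓ ρA μ Tr r κ F hρA hμ hTr hr hκ hF sol
end
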